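/- arXiv:2204.13843 — 2 statements merged into one kernel-verified Lean document; each statement's English description precedes it below -/
import Mathlib

section
/- Composition stability of uniform approximation: let φ₁, …, φ_N : ℝ^D → ℝ^D be maps each Lipschitz on every compact set, and let Ψ be a set of continuous maps closed under composition. If each φ_k lies in the closure of Ψ in C(U) for every compact U ⊂ ℝ^D (with the sup norm), then the composition φ_N ∘ ⋯ ∘ φ₁ lies in the closure of Ψ in C(U) for every compact U ⊂ ℝ^D. -/
/-- The composition `φ_{N-1} ∘ ⋯ ∘ φ_0` of a finite family of maps. -/
def compFamily {α : Type*} (N : ℕ) (u : Fin N → α → α) : α → α :=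
  (List.ofFn u).foldl (fun acc f => f ∘ acc) id

lemma compFamily_one {α : Type*} (u : Fin 1 → α → α) : compFamily 1 u = u 0 := by
  funext x; simp [compFamily]

lemma compFamily_succ' {α : Type*} (N : ℕ) (u : Fin (N+1) → α → α) :
    compFamily (N+1) u = u (Fin.last N) ∘ compFamily N (u ∘ Fin.castSucc) := by
  unfold compFamily
  rw [List.ofFn_succ']
  simp [List.concat_eq_append, Function.comp]
  rfl

lemma continuous_of_lipOnCompact {D : ℕ} (f : (Fin D → ℝ) → (Fin D → ℝ))
    (h : ∀ U : Set (Fin D → ℝ), IsCompact U → ∃ K : NNReal, LipschitzOnWith K f U) :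
    Continuous f := by
  rw [continuous_iff_continuousAt]
  intro x
  obtain ⟨K, hK⟩ := h (Metric.closedBall x 1) (isCompact_closedBall x 1)
  exact (hK.continuousOn).continuousAt (Metric.closedBall_mem_nhds x one_pos)

lemma compFamily_cont {D N : ℕ} (u : Fin N → (Fin D → ℝ) → (Fin D → ℝ))
    (h : ∀ k, Continuous (u k)) : Continuous (compFamily N u) := by
  induction N with
  | zero => simpa [compFamily] using continuous_id
  | succ n ih =>
      rw [compFamily_succ']
      exact (h _).comp (ih _ fun k => h _)

lemma comp_aux (D : ℕ) (Ψ : Set ((Fin D → ℝ) → (Fin D → ℝ)))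
    (hΨcomp : ∀ ψ₁ ∈ Ψ, ∀ ψ₂ ∈ Ψ, ψ₁ ∘ ψ₂ ∈ Ψ) :
    ∀ N (φ : Fin (N+1) → (Fin D → ℝ) → (Fin D → ℝ)),
      (∀ k, ∀ U : Set (Fin D → ℝ), IsCompact U → ∃ K : NNReal, LipschitzOnWith K (φ k) U) →
      (∀ k, ∀ U : Set (Fin D → ℝ), IsCompact U → ∀ ε > 0,
        ∃ ψ ∈ Ψ, ∀ x ∈ U, ‖φ k x - ψ x‖ ≤ ε) →
      ∀ U : Set (Fin D → ℝ), IsCompact U → ∀ ε > 0,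
        ∃ ψ ∈ Ψ, ∀ x ∈ U, ‖compFamily (N+1) φ x - ψ x‖ ≤ ε := by
  intro N
  induction N with
  | zero =>
      intro φ _ happrox U hU ε hε
      obtain ⟨ψ, hψ, h⟩ := happrox 0 U hU ε hε
      exact ⟨ψ, hψ, by simpa [compFamily_one] using h⟩
  | succ n ih =>
      intro φ hlip happrox U hU ε hε
      set g := compFamily (n+1) (φ ∘ Fin.castSucc) with hg
      have hgcont : Continuous g :=
        compFamily_cont _ fun k => continuous_of_lipOnCompact _ (hlip k.castSucc)
      have hgU : IsCompact (g '' U) := hU.image hgcont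
      set V : Set (Fin D → ℝ) := Metric.cthickening 1 (g '' U) with hV
      have hVcomp : IsCompact V := hgU.cthickening
      obtain ⟨K, hK⟩ := hlip (Fin.last (n+1)) V hVcomp
      -- approximate the last map on V within ε/2
      obtain ⟨ψ₂, hψ₂Ψ, hψ₂⟩ := happrox (Fin.last (n+1)) V hVcomp (ε/2) (by positivity)
      -- approximate g on U within δ
      set δ : ℝ := min 1 (ε / (2 * (K + 1))) with hδ
      have hδpos : 0 < δ := lt_min one_pos (by positivity)
      obtain ⟨ψ₁, hψ₁Ψ, hψ₁⟩ := ih (φ ∘ Fin.castSucc) (fun k => hlip k.castSucc)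
        (fun k => happrox k.castSucc) U hU δ hδpos
      refine ⟨ψ₂ ∘ ψ₁, hΨcomp _ hψ₂Ψ _ hψ₁Ψ, fun x hx => ?_⟩
      have hgx : g x ∈ V := Metric.self_subset_cthickening _ ⟨x, hx, rfl⟩
      have hd : dist (g x) (ψ₁ x) ≤ δ := by
        rw [dist_eq_norm]; exact hψ₁ x hx
      have hψ₁x : ψ₁ x ∈ V := by
        apply Metric.mem_cthickening_of_dist_le (ψ₁ x) (g x) 1 (g '' U) ⟨x, hx, rfl⟩
        calc dist (ψ₁ x) (g x) = dist (g x) (ψ₁ x) := dist_comm _ _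
        _ ≤ δ := hd
        _ ≤ 1 := min_le_left _ _
      have hLip : dist (φ (Fin.last (n+1)) (g x)) (φ (Fin.last (n+1)) (ψ₁ x)) ≤ K * δ := by
        calc dist (φ (Fin.last (n+1)) (g x)) (φ (Fin.last (n+1)) (ψ₁ x))
            ≤ K * dist (g x) (ψ₁ x) := hK.dist_le_mul _ hgx _ hψ₁x
        _ ≤ K * δ := by
            apply mul_le_mul_of_nonneg_left hd K.coe_nonneg
      have hKδ : (K : ℝ) * δ ≤ ε / 2 := by
        have h1 : δ ≤ ε / (2 * (K + 1)) := min_le_right _ _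
        have h2 : (K : ℝ) * δ ≤ (K + 1) * (ε / (2 * (K + 1))) := by
          apply mul_le_mul (by linarith [K.coe_nonneg]) h1 (le_of_lt hδpos) (by positivity)
        have h3 : ((K : ℝ) + 1) * (ε / (2 * (K + 1))) = ε / 2 := by
          field_simp
        linarith
      rw [compFamily_succ']
      calc ‖(φ (Fin.last (n+1)) ∘ g) x - (ψ₂ ∘ ψ₁) x‖
          = dist (φ (Fin.last (n+1)) (g x)) (ψ₂ (ψ₁ x)) := (dist_eq_norm _ _).symm
        _ ≤ dist (φ (Fin.last (n+1)) (g x)) (φ (Fin.last (n+1)) (ψ₁ x))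
            + dist (φ (Fin.last (n+1)) (ψ₁ x)) (ψ₂ (ψ₁ x)) := dist_triangle _ _ _
        _ ≤ K * δ + ε/2 := by
            have := hψ₂ (ψ₁ x) hψ₁x
            rw [dist_eq_norm]
            exact add_le_add hLip this
        _ ≤ ε := by linarith

/-- Composition stability of uniform approximation: if each locally Lipschitz
map φ_k can be uniformly approximated on every compact set by elements of a
composition-closed family Ψ of continuous maps, then so can the composition
φ_N ∘ ⋯ ∘ φ₁. -/
theorem comp_approximation_stability
    (D N : ℕ) (hN : 0 < N)
    (φ : Fin N → (Fin D → ℝ) → (Fin D → ℝ))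
    (Ψ : Set ((Fin D → ℝ) → (Fin D → ℝ)))
    (hΨcont : ∀ ψ ∈ Ψ, Continuous ψ)
    (hΨcomp : ∀ ψ₁ ∈ Ψ, ∀ ψ₂ ∈ Ψ, ψ₁ ∘ ψ₂ ∈ Ψ)
    (hlip : ∀ k, ∀ U : Set (Fin D → ℝ), IsCompact U →
      ∃ K : NNReal, LipschitzOnWith K (φ k) U)
    (happrox : ∀ k, ∀ U : Set (Fin D → ℝ), IsCompact U → ∀ ε > 0,
      ∃ ψ ∈ Ψ, ∀ x ∈ U, ‖φ k x - ψ x‖ ≤ ε) :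
    ∀ U : Set (Fin D → ℝ), IsCompact U → ∀ ε > 0,
      ∃ ψ ∈ Ψ, ∀ x ∈ U, ‖compFamily N φ x - ψ x‖ ≤ ε := by
  obtain ⟨M, rfl⟩ : ∃ M, N = M + 1 := ⟨N - 1, (Nat.succ_pred_eq_of_pos hN).symm⟩
  exact comp_aux D Ψ hΨcomp M φ hlip happrox
end

section
/- Every element of L^{i,i+1} — a D×D matrix of determinant 1 differing from the identity only in rows i and i+1 — can be factored as T^i_1 T^{i+1}_1 T^i_2 T^{i+1}_2 where T^i_m ∈ L^i and T^{i+1}_m ∈ L^{i+1} (single-row modification matrices). -/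
/-!
Left multiplication by an element of `L^k` adds to row `k` a combination of the rows and leaves
the other rows alone. Since `det P = 1`, column `i+1` of `P` is nonzero in rows `i, i+1`, so a
transvection in `L^i` followed by one in `L^{i+1}` makes the `(i+1, i+1)` entry equal to `1`. The
resulting matrix `M` is `T * U`, where `U ∈ L^{i+1}` copies row `i+1` of `M`: then `T = M * U⁻¹`
fixes every row but row `i` and has determinant `1`, which forces `T ∈ L^i`.
-/

open Matrix

/-- `RowMod D k M` : `M` agrees with the identity in every row except possibly
row `k`, and its `(k,k)` entry equals 1 (so `M ∈ L^k`, and det M = 1). -/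
def RowMod (D : ℕ) (k : Fin D) (M : Matrix (Fin D) (Fin D) ℝ) : Prop :=
  M k k = 1 ∧ ∀ r c : Fin D, r ≠ k → M r c = (1 : Matrix (Fin D) (Fin D) ℝ) r c

namespace Matrix

variable {n : Type*} [DecidableEq n] {R : Type*} [CommRing R] {K : Type*} [Field K]

/-- The set `L^k` of the paper, over an arbitrary commutative ring. -/
def IsIdentityOffRow (k : n) (M : Matrix n n R) : Prop :=
  M k k = 1 ∧ ∀ r, r ≠ k → M r = (1 : Matrix n n R) r

theorem transvection_isIdentityOffRow {k m : n} (h : k ≠ m) (c : R) :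
    IsIdentityOffRow k (transvection k m c) := by
  refine ⟨by simp [transvection, h.symm], fun r hr => ?_⟩
  ext c'
  simp [transvection, hr.symm]

variable [Fintype n]

theorem det_updateRow_one (k : n) (v : n → R) : (updateRow (1 : Matrix n n R) k v).det = v k := by
  rw [← det_transpose, ← updateCol_transpose, transpose_one, ← cramer_apply, cramer_one]
  rfl

theorem det_eq_apply_of_row_eq_one {M : Matrix n n R} {k : n}
    (h : ∀ r, r ≠ k → M r = (1 : Matrix n n R) r) : M.det = M k k := by
  have hM : updateRow 1 k (M k) = M := by
    ext r : 1
    by_cases hr : r = k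
    · subst hr
      rw [updateRow_self]
    · rw [updateRow_ne hr, h r hr]
  rw [← det_updateRow_one k (M k), hM]

theorem exists_isIdentityOffRow_mul_eq_of_apply_eq_one {i l : n} {M : Matrix n n R}
    (hM : ∀ r, r ≠ i → r ≠ l → M r = (1 : Matrix n n R) r) (hdet : M.det = 1) (hll : M l l = 1) :
    ∃ T U : Matrix n n R, IsIdentityOffRow i T ∧ IsIdentityOffRow l U ∧ M = T * U := by
  set U := updateRow (1 : Matrix n n R) l (M l)
  have hU : IsIdentityOffRow l U := ⟨by simp [U, hll], fun r hr => updateRow_ne hr⟩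
  have hUdet : U.det = 1 := hU.1 ▸ det_eq_apply_of_row_eq_one hU.2
  have hUunit : IsUnit U.det := hUdet ▸ isUnit_one
  have hMU : ∀ r, r ≠ i → M r = U r := by
    intro r hri
    by_cases hrl : r = l
    · subst hrl
      exact updateRow_self.symm
    · rw [hM r hri hrl, hU.2 r hrl]
  have hT : ∀ r, r ≠ i → (M * U⁻¹) r = (1 : Matrix n n R) r := by
    intro r hr
    rw [← mul_nonsing_inv U hUunit]
    ext c
    simp only [mul_apply, hMU r hr]
  refine ⟨M * U⁻¹, U, ⟨?_, hT⟩, hU, (nonsing_inv_mul_cancel_right U M hUunit).symm⟩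
  rw [← det_eq_apply_of_row_eq_one hT, det_mul, det_nonsing_inv, hdet, hUdet, Ring.inverse_one,
    one_mul]

theorem exists_add_mul_add_mul_eq_one {p q : K} (h : p ≠ 0 ∨ q ≠ 0) :
    ∃ a b : K, q + b * (p + a * q) = 1 := by
  by_cases hp : p = 0
  · have hq : q ≠ 0 := h.resolve_left (not_not.mpr hp)
    exact ⟨1, (1 - q) / q, by rw [hp]; field_simp; ring⟩
  · exact ⟨0, (1 - q) / p, by field_simp; ring⟩

theorem exists_transvection_mul_transvection_mul_apply_eq_one {i l : n} (hil : i ≠ l)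
    {M : Matrix n n K} (hM : ∀ r, r ≠ i → r ≠ l → M r = (1 : Matrix n n K) r) (hdet : M.det ≠ 0) :
    ∃ a b : K, (transvection l i b * (transvection i l a * M)) l l = 1 := by
  have hcol : M i l ≠ 0 ∨ M l l ≠ 0 := by
    by_contra! h
    refine hdet (det_eq_zero_of_column_eq_zero l fun r => ?_)
    by_cases hri : r = i
    · exact hri ▸ h.1
    by_cases hrl : r = l
    · exact hrl ▸ h.2
    · rw [hM r hri hrl, one_apply_ne hrl]
  obtain ⟨a, b, hab⟩ := exists_add_mul_add_mul_eq_one hcol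
  refine ⟨a, b, ?_⟩
  rwa [transvection_mul_apply_same, transvection_mul_apply_of_ne _ _ _ _ hil.symm,
    transvection_mul_apply_same]

theorem exists_eq_mul_mul_mul_of_row_eq_one {i l : n} (hil : i ≠ l) {P : Matrix n n K}
    (hP : ∀ r, r ≠ i → r ≠ l → P r = (1 : Matrix n n K) r) (hdet : P.det = 1) :
    ∃ T₁ U₁ T₂ U₂ : Matrix n n K, IsIdentityOffRow i T₁ ∧ IsIdentityOffRow l U₁ ∧
      IsIdentityOffRow i T₂ ∧ IsIdentityOffRow l U₂ ∧ P = T₁ * U₁ * T₂ * U₂ := by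
  obtain ⟨a, b, hab⟩ :=
    exists_transvection_mul_transvection_mul_apply_eq_one hil hP (by simp [hdet])
  set M := transvection l i b * (transvection i l a * P)
  have hM : ∀ r, r ≠ i → r ≠ l → M r = (1 : Matrix n n K) r := by
    intro r hri hrl
    ext c
    simp only [M]
    rw [transvection_mul_apply_of_ne _ _ _ _ hrl, transvection_mul_apply_of_ne _ _ _ _ hri,
      hP r hri hrl]
  have hdetM : M.det = 1 := by simp [M, det_mul, hil, hil.symm, hdet]
  obtain ⟨T₂, U₂, hT₂, hU₂, hTU⟩ := exists_isIdentityOffRow_mul_eq_of_apply_eq_one hM hdetM hab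
  refine ⟨transvection i l (-a), transvection l i (-b), T₂, U₂,
    transvection_isIdentityOffRow hil _, transvection_isIdentityOffRow hil.symm _, hT₂, hU₂, ?_⟩
  rw [mul_assoc _ T₂, ← hTU]
  simp only [M, ← mul_assoc]
  rw [mul_assoc (transvection i l (-a)), transvection_mul_transvection_same l i hil.symm,
    neg_add_cancel, transvection_zero, mul_one, transvection_mul_transvection_same i l hil,
    neg_add_cancel, transvection_zero, one_mul]

end Matrix

theorem rowMod_iff_isIdentityOffRow {D : ℕ} {k : Fin D} {M : Matrix (Fin D) (Fin D) ℝ} :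
    RowMod D k M ↔ IsIdentityOffRow k M := by
  simp only [RowMod, IsIdentityOffRow, funext_iff]
  exact and_congr_right' ⟨fun h r hr c => h r c hr, fun h r c hr => h r hr c⟩

/-- Every element of L^{i,i+1} — a D×D matrix of determinant 1 differing from
the identity only in rows i and i+1 (0-based) — factors as
T^i_1 · T^{i+1}_1 · T^i_2 · T^{i+1}_2 with T^i_m ∈ L^i and T^{i+1}_m ∈ L^{i+1}. -/
theorem two_row_factorization' (D : ℕ) (i : ℕ) (hi : i + 1 < D)
    (P : Matrix (Fin D) (Fin D) ℝ) (hdet : P.det = 1)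
    (hrows : ∀ r c : Fin D, r.val ≠ i → r.val ≠ i + 1 →
      P r c = (1 : Matrix (Fin D) (Fin D) ℝ) r c) :
    ∃ T1 T2 U1 U2 : Matrix (Fin D) (Fin D) ℝ,
      RowMod D ⟨i, Nat.lt_of_succ_lt hi⟩ T1 ∧ RowMod D ⟨i + 1, hi⟩ U1 ∧
      RowMod D ⟨i, Nat.lt_of_succ_lt hi⟩ T2 ∧ RowMod D ⟨i + 1, hi⟩ U2 ∧
      P = T1 * U1 * T2 * U2 := by
  simp only [rowMod_iff_isIdentityOffRow]
  have hil : (⟨i, Nat.lt_of_succ_lt hi⟩ : Fin D) ≠ ⟨i + 1, hi⟩ := by simp [Fin.ext_iff]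
  obtain ⟨T₁, U₁, T₂, U₂, hfactor⟩ := exists_eq_mul_mul_mul_of_row_eq_one hil
    (fun r hri hrl => funext fun c => hrows r c (hri <| Fin.ext ·) (hrl <| Fin.ext ·)) hdet
  exact ⟨T₁, T₂, U₁, U₂, hfactor⟩
end
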